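/- Let A ∈ ℝ^{2n×2n} be symmetric positive definite, partitioned into n×n blocks as A = [[A₁₁, A₁₂],[A₁₂ᵀ, A₂₂]], let A₁₁ = L₁₁L₁₁ᵀ be the Cholesky factorization, and set L₁ := [[L₁₁, 0],[(L₁₁⁻¹A₁₂)ᵀ, (L₁₁ᵀ)⁻¹]]. Then ‖Ω(L₁)‖₂ ≤ ‖A₁₁⁻¹‖₂ · ‖Ω(A)‖₂. -/

import Mathlib

open Matrix

/-- Spectral norm (ℓ² operator norm) of a real square matrix. -/
noncomputable def specNorm {m : Type*} [Fintype m] [DecidableEq m] (M : Matrix m m ℝ) : ℝ :=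
  ‖LinearMap.toContinuousLinearMap (Matrix.toEuclideanLin M)‖

/-- Frobenius norm of a real square matrix. -/
noncomputable def frobNorm {m : Type*} [Fintype m] (M : Matrix m m ℝ) : ℝ :=
  Real.sqrt (∑ i, ∑ j, (M i j) ^ 2)

/-- Spectral condition number κ₂(M) = ‖M⁻¹‖₂ ‖M‖₂. -/
noncomputable def cond2 {m : Type*} [Fintype m] [DecidableEq m] (M : Matrix m m ℝ) : ℝ :=
  specNorm M⁻¹ * specNorm M

/-- Spectral radius of a real square matrix (via its complex spectrum). -/
noncomputable def specRad {m : Type*} [Fintype m] [DecidableEq m] (M : Matrix m m ℝ) : ℝ :=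
  (spectralRadius ℂ (M.map (Complex.ofReal ·))).toReal

/-- Lower triangular predicate. -/
def LowerTri {k : ℕ} (M : Matrix (Fin k) (Fin k) ℝ) : Prop := ∀ i j, i < j → M i j = 0
/-- Upper triangular predicate. -/
def UpperTri {k : ℕ} (M : Matrix (Fin k) (Fin k) ℝ) : Prop := ∀ i j, j < i → M i j = 0
/-- Positive diagonal entries predicate. -/
def PosDiag {k : ℕ} (M : Matrix (Fin k) (Fin k) ℝ) : Prop := ∀ i, 0 < M i i

/-- The standard symplectic matrix J = [[0, I], [-I, 0]]. -/
noncomputable def Jmat (n : ℕ) : Matrix (Fin n ⊕ Fin n) (Fin n ⊕ Fin n) ℝ :=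
  fromBlocks 0 1 (-1) 0

/-- M is symplectic iff MᵀJM = J. -/
def IsSymplectic {n : ℕ} (M : Matrix (Fin n ⊕ Fin n) (Fin n ⊕ Fin n) ℝ) : Prop :=
  Mᵀ * Jmat n * M = Jmat n

/-- Ω(M) = MᵀJM − J, the loss of symplecticity. -/
noncomputable def Omega {n : ℕ} (M : Matrix (Fin n ⊕ Fin n) (Fin n ⊕ Fin n) ℝ) :
    Matrix (Fin n ⊕ Fin n) (Fin n ⊕ Fin n) ℝ :=
  Mᵀ * Jmat n * M - Jmat n

/-!
With `P = diag(L₁₁⁻¹, 0)` one has `Ω(L₁) = P Ω(A) Pᵀ`: both sides vanish off the leading block,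
where `A₁₁ = L₁₁L₁₁ᵀ` makes them agree. Hence `‖Ω(L₁)‖₂ ≤ ‖L₁₁⁻¹‖₂² ‖Ω(A)‖₂`, and
`‖L₁₁⁻¹‖₂² = ‖L₁₁⁻ᵀ L₁₁⁻¹‖₂ = ‖A₁₁⁻¹‖₂` by the C⋆-identity.
-/

open scoped Matrix.Norms.L2Operator

namespace Matrix

variable {𝕜 : Type*} [RCLike 𝕜]

lemma l2_opNorm_one_le {n : Type*} [Fintype n] [DecidableEq n] : ‖(1 : Matrix n n 𝕜)‖ ≤ 1 := by
  rw [cstar_norm_def, map_one]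
  exact ContinuousLinearMap.norm_id_le

lemma l2_opNorm_le_one_of_conjTranspose_mul_self_eq_one {m n : Type*} [Fintype m] [Fintype n]
    [DecidableEq n] {E : Matrix m n 𝕜} (hE : Eᴴ * E = 1) : ‖E‖ ≤ 1 := by
  have h : ‖E‖ * ‖E‖ ≤ 1 := by
    rw [← l2_opNorm_conjTranspose_mul_self, hE]
    exact l2_opNorm_one_le
  nlinarith [norm_nonneg E]

lemma l2_opNorm_fromRows_one_zero_le {m m' : Type*} [Fintype m] [Fintype m'] [DecidableEq m] :
    ‖(fromRows 1 0 : Matrix (m ⊕ m') m 𝕜)‖ ≤ 1 :=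
  l2_opNorm_le_one_of_conjTranspose_mul_self_eq_one <| by
    rw [conjTranspose_fromRows_eq_fromCols_conjTranspose, fromCols_mul_fromRows]; simp

lemma l2_opNorm_mul_mul_le {l m n p : Type*} [Fintype l] [Fintype m] [Fintype n] [Fintype p]
    [DecidableEq m] [DecidableEq n] [DecidableEq p]
    (A : Matrix l m 𝕜) (B : Matrix m n 𝕜) (C : Matrix n p 𝕜) :
    ‖A * B * C‖ ≤ ‖A‖ * ‖B‖ * ‖C‖ :=
  (l2_opNorm_mul _ _).trans (by gcongr; exact l2_opNorm_mul _ _)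

lemma l2_opNorm_fromBlocks_zero_zero_zero_le {m n m' n' : Type*} [Fintype m] [Fintype n]
    [Fintype m'] [Fintype n'] [DecidableEq m] [DecidableEq n] [DecidableEq n']
    (X : Matrix m n 𝕜) : ‖(fromBlocks X 0 0 0 : Matrix (m ⊕ m') (n ⊕ n') 𝕜)‖ ≤ ‖X‖ := by
  set E : Matrix (m ⊕ m') m 𝕜 := fromRows 1 0
  set F : Matrix (n ⊕ n') n 𝕜 := fromRows 1 0
  have hfac : fromBlocks X 0 0 0 = E * X * Fᴴ := by
    rw [conjTranspose_fromRows_eq_fromCols_conjTranspose, fromRows_mul, fromRows_mul_fromCols]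
    simp
  calc _ ≤ ‖E‖ * ‖X‖ * ‖Fᴴ‖ := hfac ▸ l2_opNorm_mul_mul_le _ _ _
    _ ≤ 1 * ‖X‖ * 1 := by
        rw [l2_opNorm_conjTranspose]
        gcongr
        exacts [l2_opNorm_fromRows_one_zero_le, l2_opNorm_fromRows_one_zero_le]
    _ = ‖X‖ := by ring

lemma l2_opNorm_inv_mul_conjTranspose {n : Type*} [Fintype n] [DecidableEq n]
    (L : Matrix n n 𝕜) : ‖(L * Lᴴ)⁻¹‖ = ‖L⁻¹‖ * ‖L⁻¹‖ := by
  rw [mul_inv_rev, ← conjTranspose_nonsing_inv, l2_opNorm_conjTranspose_mul_self]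

end Matrix

lemma specNorm_eq_l2_opNorm {m : Type*} [Fintype m] [DecidableEq m] (M : Matrix m m ℝ) :
    specNorm M = ‖M‖ := rfl

lemma isUnit_det_of_lowerTri_of_posDiag {k : ℕ} {L : Matrix (Fin k) (Fin k) ℝ}
    (hlow : LowerTri L) (hdiag : PosDiag L) : IsUnit L.det := by
  rw [det_of_isLowerTriangular L fun i j hij => hlow i j (by simpa using hij)]
  exact (Finset.prod_pos fun i _ => hdiag i).ne'.isUnit

lemma Omega_fromBlocks {n : ℕ} (P Q R S : Matrix (Fin n) (Fin n) ℝ) :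
    Omega (fromBlocks P Q R S) =
      fromBlocks (Pᵀ * R - Rᵀ * P) (Pᵀ * S - Rᵀ * Q - 1) (Qᵀ * R - Sᵀ * P + 1)
        (Qᵀ * S - Sᵀ * Q) := by
  simp only [Omega, Jmat, fromBlocks_transpose, fromBlocks_multiply, sub_eq_add_neg,
    fromBlocks_neg, fromBlocks_add]
  congr 1 <;> simp only [Matrix.mul_zero, Matrix.neg_mul, Matrix.mul_one, Matrix.mul_neg,
    neg_zero, add_zero, zero_add, neg_neg] <;> abel

lemma Omega_fromBlocks_cholesky {n : ℕ} (L A12 A22 : Matrix (Fin n) (Fin n) ℝ)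
    (hL : IsUnit L.det) :
    Omega (fromBlocks L 0 (L⁻¹ * A12)ᵀ Lᵀ⁻¹) =
      fromBlocks L⁻¹ 0 0 0 * Omega (fromBlocks (L * Lᵀ) A12 A12ᵀ A22) *
        (fromBlocks L⁻¹ 0 0 0)ᵀ := by
  have hLt : IsUnit Lᵀ.det := by rwa [det_transpose]
  simp only [Omega_fromBlocks, fromBlocks_transpose, fromBlocks_multiply, transpose_transpose,
    transpose_zero, Matrix.mul_zero, Matrix.zero_mul, add_zero, transpose_mul,
    transpose_nonsing_inv, mul_nonsing_inv _ hLt, nonsing_inv_mul _ hL, sub_self, sub_zero,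
    zero_sub, neg_add_cancel]
  congr 1
  simp only [Matrix.mul_sub, Matrix.sub_mul, Matrix.mul_assoc, mul_nonsing_inv _ hLt,
    Matrix.mul_one]
  simp only [← Matrix.mul_assoc, nonsing_inv_mul _ hL, Matrix.one_mul]

theorem stmt15_general {n : ℕ}
    (A11 A12 A22 L11 : Matrix (Fin n) (Fin n) ℝ)
    (A : Matrix (Fin n ⊕ Fin n) (Fin n ⊕ Fin n) ℝ)
    (hA : A = fromBlocks A11 A12 A12ᵀ A22)
    (hlow : LowerTri L11) (hdiag : PosDiag L11) (hchol : A11 = L11 * L11ᵀ) :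
    specNorm (Omega (fromBlocks L11 0 (L11⁻¹ * A12)ᵀ L11ᵀ⁻¹)) ≤
      specNorm A11⁻¹ * specNorm (Omega A) := by
  subst hA hchol
  simp only [specNorm_eq_l2_opNorm]
  rw [Omega_fromBlocks_cholesky L11 A12 A22 (isUnit_det_of_lowerTri_of_posDiag hlow hdiag)]
  set P : Matrix (Fin n ⊕ Fin n) (Fin n ⊕ Fin n) ℝ := fromBlocks L11⁻¹ 0 0 0
  set B := Omega (fromBlocks (L11 * L11ᵀ) A12 A12ᵀ A22)
  have hP : ‖P‖ ≤ ‖L11⁻¹‖ := l2_opNorm_fromBlocks_zero_zero_zero_le _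
  have hPt : ‖Pᵀ‖ = ‖P‖ := by
    rw [← conjTranspose_eq_transpose_of_trivial, l2_opNorm_conjTranspose]
  have hA11 : ‖(L11 * L11ᵀ)⁻¹‖ = ‖L11⁻¹‖ * ‖L11⁻¹‖ := by
    simpa using l2_opNorm_inv_mul_conjTranspose L11
  rw [hA11]
  calc ‖P * B * Pᵀ‖ ≤ ‖P‖ * ‖B‖ * ‖Pᵀ‖ := l2_opNorm_mul_mul_le _ _ _
    _ = ‖P‖ * ‖B‖ * ‖P‖ := by rw [hPt]
    _ ≤ ‖L11⁻¹‖ * ‖B‖ * ‖L11⁻¹‖ := by gcongr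
    _ = ‖L11⁻¹‖ * ‖L11⁻¹‖ * ‖B‖ := by ring

/-- ‖Ω(L₁)‖₂ ≤ ‖A₁₁⁻¹‖₂ ‖Ω(A)‖₂ for L₁ = [[L₁₁,0],[(L₁₁⁻¹A₁₂)ᵀ,(L₁₁ᵀ)⁻¹]],
where A₁₁ = L₁₁L₁₁ᵀ is the Cholesky factorization. -/
theorem stmt15 {n : ℕ} (hn : 1 ≤ n)
    (A11 A12 A22 L11 : Matrix (Fin n) (Fin n) ℝ)
    (A : Matrix (Fin n ⊕ Fin n) (Fin n ⊕ Fin n) ℝ)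
    (hA : A = fromBlocks A11 A12 A12ᵀ A22)
    (hpd : A.PosDef)
    (hlow : LowerTri L11) (hdiag : PosDiag L11) (hchol : A11 = L11 * L11ᵀ) :
    specNorm (Omega (fromBlocks L11 0 (L11⁻¹ * A12)ᵀ L11ᵀ⁻¹)) ≤
      specNorm A11⁻¹ * specNorm (Omega A) :=
  stmt15_general A11 A12 A22 L11 A hA hlow hdiag hchol
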